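/- Let f(x) = -log(e^{x/2} + e^{-x/2}) viewed as a function of s = x². Then f is convex in s, and consequently for all x, ξ ∈ ℝ: -log(e^{x/2} + e^{-x/2}) ≥ -log(e^{ξ/2} + e^{-ξ/2}) - (tanh(ξ/2)/(4ξ))·(x² - ξ²). -/

import Mathlib

/-!
Writing `u = √s / 2`, the derivative of `s ↦ -log (2 cosh (√s / 2))` on `s > 0` is
`-(tanh u / u) / 8`, which increases with `s` because `tanh` is concave on `[0, ∞)` and vanishes
at `0`. The inequality is the tangent line of this convex function at `ξ²`, read at `x²`; both
sides are even in `x` and in `ξ`, so the square roots `√(x²) = |x|`, `√(ξ²) = |ξ|` disappear.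
-/

open Real Set

namespace Real

theorem hasDerivAt_tanh (x : ℝ) : HasDerivAt tanh (cosh x ^ 2)⁻¹ x := by
  have h := (hasDerivAt_sinh x).div (hasDerivAt_cosh x) (cosh_pos x).ne'
  rw [show sinh / cosh = tanh from funext fun y => (tanh_eq_sinh_div_cosh y).symm] at h
  refine h.congr_deriv ?_
  rw [← pow_two, ← pow_two, cosh_sq_sub_sinh_sq, one_div]

theorem concaveOn_tanh_Ici : ConcaveOn ℝ (Ici 0) tanh := by
  refine AntitoneOn.concaveOn_of_deriv (convex_Ici 0)
    (fun x _ => (hasDerivAt_tanh x).continuousAt.continuousWithinAt)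
    (fun x _ => (hasDerivAt_tanh x).differentiableAt.differentiableWithinAt) ?_
  rw [interior_Ici]
  intro x hx y hy hxy
  simp only [(hasDerivAt_tanh _).deriv]
  have := cosh_pos x
  gcongr
  exact cosh_le_cosh.2 (by rwa [abs_of_pos hx, abs_of_pos hy])

theorem antitoneOn_tanh_div_self : AntitoneOn (fun u => tanh u / u) (Ioi 0) := by
  intro x hx y hy hxy
  simpa [slope_def_field] using concaveOn_tanh_Ici.antitoneOn_slope_gt (self_mem_Ici (a := 0))
    ⟨mem_Ici.2 hx.le, hx⟩ ⟨mem_Ici.2 hy.le, hy⟩ hxy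

end Real

theorem ConvexOn.add_deriv_mul_sub_le {S : Set ℝ} {f : ℝ → ℝ} {f' x y : ℝ}
    (hf : ConvexOn ℝ S f) (hx : x ∈ S) (hy : y ∈ S) (hf' : HasDerivAt f f' x) :
    f x + f' * (y - x) ≤ f y := by
  rcases lt_trichotomy x y with hxy | rfl | hxy
  · have := hf.le_slope_of_hasDerivAt hx hy hxy hf'
    rw [slope_def_field, le_div_iff₀ (sub_pos.2 hxy)] at this
    linarith
  · simp
  · have := hf.slope_le_of_hasDerivAt hy hx hxy hf'
    rw [slope_def_field, div_le_iff₀ (sub_pos.2 hxy)] at this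
    linarith

noncomputable def negLogExpSum (x : ℝ) : ℝ := -log (exp (x / 2) + exp (-x / 2))

theorem negLogExpSum_neg (x : ℝ) : negLogExpSum (-x) = negLogExpSum x := by
  rw [negLogExpSum, negLogExpSum, neg_neg, add_comm]

theorem continuous_negLogExpSum : Continuous negLogExpSum :=
  ((by fun_prop : Continuous fun x => exp (x / 2) + exp (-x / 2)).log
    fun x => by positivity).neg

theorem negLogExpSum_sqrt_sq (x : ℝ) : negLogExpSum √(x ^ 2) = negLogExpSum x := by
  rw [sqrt_sq_eq_abs]
  rcases abs_choice x with h | h <;> rw [h]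
  exact negLogExpSum_neg x

theorem hasDerivAt_negLogExpSum (x : ℝ) :
    HasDerivAt negLogExpSum (-(tanh (x / 2) / 2)) x := by
  have hsum : HasDerivAt (fun y => exp (y / 2) + exp (-y / 2))
      (exp (x / 2) * (1 / 2) + exp (-x / 2) * (-1 / 2)) x :=
    (((hasDerivAt_id x).div_const 2).exp).add (((hasDerivAt_id x).neg.div_const 2).exp)
  refine (hsum.log (by positivity)).neg.congr_deriv ?_
  rw [tanh_eq_sinh_div_cosh, sinh_eq, cosh_eq, neg_div]
  field_simp
  ring

theorem hasDerivAt_negLogExpSum_sqrt {s : ℝ} (hs : 0 < s) :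
    HasDerivAt (fun s => negLogExpSum √s) (-(tanh (√s / 2) / (4 * √s))) s := by
  refine ((hasDerivAt_negLogExpSum √s).comp s (hasDerivAt_sqrt hs.ne')).congr_deriv ?_
  have := sqrt_pos.2 hs
  field_simp
  ring

theorem convexOn_negLogExpSum_sqrt : ConvexOn ℝ (Ici 0) (fun s => negLogExpSum √s) := by
  refine MonotoneOn.convexOn_of_deriv (convex_Ici 0)
    (continuous_negLogExpSum.comp continuous_sqrt).continuousOn ?_ ?_ <;> rw [interior_Ici]
  · exact fun s hs => (hasDerivAt_negLogExpSum_sqrt hs).differentiableAt.differentiableWithinAt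
  · intro s hs t ht hst
    have hs' : 0 < √s / 2 := by have := sqrt_pos.2 (mem_Ioi.1 hs); positivity
    have hst' : √s / 2 ≤ √t / 2 := by gcongr
    have h8 (u : ℝ) : tanh (u / 2) / (4 * u) = tanh (u / 2) / (u / 2) / 8 := by ring
    simp only [(hasDerivAt_negLogExpSum_sqrt hs).deriv, (hasDerivAt_negLogExpSum_sqrt ht).deriv,
      h8, neg_le_neg_iff]
    exact div_le_div_of_nonneg_right (antitoneOn_tanh_div_self hs' (hs'.trans_le hst') hst')
      (by norm_num)

theorem stmt18 :
    ConvexOn ℝ (Set.Ici 0)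
      (fun s : ℝ => -Real.log (Real.exp (Real.sqrt s / 2) + Real.exp (-(Real.sqrt s) / 2))) ∧
    ∀ x ξ : ℝ, ξ ≠ 0 →
      -Real.log (Real.exp (x/2) + Real.exp (-x/2)) ≥
        -Real.log (Real.exp (ξ/2) + Real.exp (-ξ/2)) -
          (Real.tanh (ξ/2)/(4*ξ)) * (x^2 - ξ^2) := by
  refine ⟨convexOn_negLogExpSum_sqrt, fun x ξ hξ => ?_⟩
  have htangent := convexOn_negLogExpSum_sqrt.add_deriv_mul_sub_le (sq_nonneg ξ) (sq_nonneg x)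
    (hasDerivAt_negLogExpSum_sqrt (by positivity))
  have hslope : tanh (√(ξ ^ 2) / 2) / (4 * √(ξ ^ 2)) = tanh (ξ / 2) / (4 * ξ) := by
    rw [sqrt_sq_eq_abs]
    rcases abs_choice ξ with h | h <;> rw [h]
    rw [neg_div, tanh_neg, mul_neg, neg_div_neg_eq]
  rw [negLogExpSum_sqrt_sq, negLogExpSum_sqrt_sq, hslope] at htangent
  unfold negLogExpSum at htangent
  linarith
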